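/- arXiv:1410.4540 — 5 statements merged into one kernel-verified Lean document; each statement's English description precedes it below -/
import Mathlib

section
/- Orthogonality of irreducible projective characters: let ω be a factor set on a finite group G and let π₁ and π₂ be irreducible unitary ω-representations of G with characters χ₁ and χ₂. If π₁ and π₂ are isomorphic, then Σ_{g ∈ G} χ₁(g) · conj(χ₂(g)) = |G|, and if π₁ and π₂ are not isomorphic, then Σ_{g ∈ G} χ₁(g) · conj(χ₂(g)) = 0 (conj denotes complex conjugation). -/
open Matrix

/-- A (normalized, U(1)-valued) factor set on a group `G`. -/
def IsFactorSet {G : Type*} [Group G] (ω : G → G → ℂ) : Prop :=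
  (∀ g h : G, ‖ω g h‖ = 1) ∧
  (∀ g : G, ω 1 g = 1) ∧
  (∀ g : G, ω g 1 = 1) ∧
  (∀ g h k : G, ω g h * ω (g * h) k = ω h k * ω g (h * k))

/-- A unitary ω-representation of `G` of dimension `n`. -/
def IsProjRep {G : Type*} [Group G] (ω : G → G → ℂ) {n : ℕ}
    (π : G → Matrix (Fin n) (Fin n) ℂ) : Prop :=
  (∀ g : G, π g ∈ Matrix.unitaryGroup (Fin n) ℂ) ∧
  π 1 = 1 ∧
  (∀ g h : G, π g * π h = ω g h • π (g * h))

/-- The (projective) character of a matrix-valued map. -/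
noncomputable def projChar {G : Type*} {n : ℕ} (π : G → Matrix (Fin n) (Fin n) ℂ) (g : G) : ℂ :=
  (π g).trace

/-- Irreducibility: the space is nonzero and the only invariant subspaces are `⊥` and `⊤`. -/
def IsIrredRep {G : Type*} {n : ℕ} (π : G → Matrix (Fin n) (Fin n) ℂ) : Prop :=
  0 < n ∧ ∀ W : Submodule ℂ (Fin n → ℂ),
    (∀ g : G, ∀ v ∈ W, (π g).mulVec v ∈ W) → W = ⊥ ∨ W = ⊤

/-- Isomorphism of two projective representations: a linear equivalence intertwining them. -/
def ProjRepIso {G : Type*} {n₁ n₂ : ℕ} (π₁ : G → Matrix (Fin n₁) (Fin n₁) ℂ)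
    (π₂ : G → Matrix (Fin n₂) (Fin n₂) ℂ) : Prop :=
  ∃ S : (Fin n₁ → ℂ) ≃ₗ[ℂ] (Fin n₂ → ℂ),
    ∀ (g : G) (v : Fin n₁ → ℂ), S ((π₁ g).mulVec v) = (π₂ g).mulVec (S v)

/-! ### Auxiliary lemmas -/

lemma ProjOrth.projRepIso_symm {G : Type*} {n₁ n₂ : ℕ} {π₁ : G → Matrix (Fin n₁) (Fin n₁) ℂ}
    {π₂ : G → Matrix (Fin n₂) (Fin n₂) ℂ} (h : ProjRepIso π₁ π₂) : ProjRepIso π₂ π₁ := by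
  obtain ⟨S, hS⟩ := h
  refine ⟨S.symm, fun g v => S.injective ?_⟩
  rw [hS, LinearEquiv.apply_symm_apply, LinearEquiv.apply_symm_apply]

/-- Schur's lemma, non-isomorphic form: any intertwiner between non-isomorphic
irreducibles is zero. -/
lemma ProjOrth.schur_ne {G : Type*} {n₁ n₂ : ℕ} {π₁ : G → Matrix (Fin n₁) (Fin n₁) ℂ}
    {π₂ : G → Matrix (Fin n₂) (Fin n₂) ℂ}
    (hirr₁ : IsIrredRep π₁) (hirr₂ : IsIrredRep π₂)
    (hni : ¬ ProjRepIso π₂ π₁)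
    (T : Matrix (Fin n₁) (Fin n₂) ℂ)
    (hT : ∀ g : G, π₁ g * T = T * π₂ g) : T = 0 := by
  by_contra hT0
  apply hni
  set f := Matrix.toLin' T with hf
  have hfT : ∀ v, f v = T.mulVec v := fun v => rfl
  have hfne : f ≠ 0 := by
    intro h0
    exact hT0 (Matrix.toLin'.injective (by rw [← hf, h0, map_zero]))
  have hkinv : ∀ g : G, ∀ v ∈ LinearMap.ker f, (π₂ g).mulVec v ∈ LinearMap.ker f := by
    intro g v hv
    rw [LinearMap.mem_ker] at hv ⊢
    rw [hfT, mulVec_mulVec, ← hT, ← mulVec_mulVec, ← hfT, hv, mulVec_zero]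
  have hker : LinearMap.ker f = ⊥ := by
    rcases hirr₂.2 (LinearMap.ker f) hkinv with h | h
    · exact h
    · exact absurd (LinearMap.ker_eq_top.mp h) hfne
  have hrinv : ∀ g : G, ∀ v ∈ LinearMap.range f, (π₁ g).mulVec v ∈ LinearMap.range f := by
    intro g v hv
    obtain ⟨w, hw⟩ := hv
    exact ⟨(π₂ g).mulVec w, by rw [hfT, mulVec_mulVec, ← hT, ← mulVec_mulVec, ← hfT, hw]⟩
  have hrange : LinearMap.range f = ⊤ := by
    rcases hirr₁.2 (LinearMap.range f) hrinv with h | h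
    · exact absurd (LinearMap.range_eq_bot.mp h) hfne
    · exact h
  refine ⟨LinearEquiv.ofBijective f ⟨LinearMap.ker_eq_bot.mp hker, LinearMap.range_eq_top.mp hrange⟩,
    fun g v => ?_⟩
  show f ((π₂ g).mulVec v) = (π₁ g).mulVec (f v)
  rw [hfT, hfT, mulVec_mulVec, mulVec_mulVec, hT]

/-- Schur's lemma, endomorphism form: a self-intertwiner of an irreducible is scalar. -/
lemma ProjOrth.schur_same {G : Type*} {n : ℕ} {π : G → Matrix (Fin n) (Fin n) ℂ}
    (hirr : IsIrredRep (G := G) π)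
    (T : Matrix (Fin n) (Fin n) ℂ) (hT : ∀ g : G, π g * T = T * π g) :
    ∃ c : ℂ, T = c • (1 : Matrix (Fin n) (Fin n) ℂ) := by
  have hn : 0 < n := hirr.1
  have : Nonempty (Fin n) := Fin.pos_iff_nonempty.mp hn
  have : Nontrivial (Fin n → ℂ) := Function.nontrivial
  obtain ⟨c, hc⟩ := Module.End.exists_eigenvalue (Matrix.toLin' T)
  refine ⟨c, ?_⟩
  have hW : ∀ g : G, ∀ v ∈ Module.End.eigenspace (Matrix.toLin' T) c,
      (π g).mulVec v ∈ Module.End.eigenspace (Matrix.toLin' T) c := by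
    intro g v hv
    rw [Module.End.mem_eigenspace_iff] at hv ⊢
    show T.mulVec ((π g).mulVec v) = c • (π g).mulVec v
    rw [mulVec_mulVec, ← hT, ← mulVec_mulVec]
    have hv' : T.mulVec v = c • v := hv
    rw [hv', mulVec_smul]
  rcases hirr.2 _ hW with h | h
  · exact absurd h hc
  · apply Matrix.toLin'.injective
    apply LinearMap.ext
    intro v
    have hv : v ∈ Module.End.eigenspace (Matrix.toLin' T) c := h ▸ Submodule.mem_top
    rw [Module.End.mem_eigenspace_iff] at hv
    have hv' : T.mulVec v = c • v := hv
    show T.mulVec v = (c • (1:Matrix (Fin n) (Fin n) ℂ)).mulVec v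
    rw [hv', smul_mulVec, one_mulVec]

/-- The averaged matrix `∑ g, π₁ g * A * (π₂ g)ᴴ` intertwines `π₁` and `π₂`. -/
lemma ProjOrth.avg_intertwines {G : Type*} [Group G] [Fintype G] {ω : G → G → ℂ} {n₁ n₂ : ℕ}
    {π₁ : G → Matrix (Fin n₁) (Fin n₁) ℂ} {π₂ : G → Matrix (Fin n₂) (Fin n₂) ℂ}
    (hω : IsFactorSet ω) (h₁ : IsProjRep ω π₁) (h₂ : IsProjRep ω π₂)
    (A : Matrix (Fin n₁) (Fin n₂) ℂ) (h : G) :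
    π₁ h * (∑ g : G, π₁ g * A * (π₂ g)ᴴ) = (∑ g : G, π₁ g * A * (π₂ g)ᴴ) * π₂ h := by
  have term : ∀ g : G, π₁ h * (π₁ g * A * (π₂ g)ᴴ) * (π₂ h)ᴴ
      = π₁ (h * g) * A * (π₂ (h * g))ᴴ := by
    intro g
    have e1 : π₁ h * (π₁ g * A * (π₂ g)ᴴ) * (π₂ h)ᴴ
        = (π₁ h * π₁ g) * A * ((π₂ h) * (π₂ g))ᴴ := by
      rw [conjTranspose_mul]; simp only [Matrix.mul_assoc]
    rw [e1, h₁.2.2, h₂.2.2, conjTranspose_smul]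
    rw [Matrix.mul_smul, Matrix.smul_mul, Matrix.smul_mul, smul_smul]
    have habs : star (ω h g) * ω h g = 1 := by
      rw [Complex.star_def, mul_comm, Complex.mul_conj, Complex.normSq_eq_norm_sq, hω.1 h g]
      norm_num
    rw [habs, one_smul]
  have key : π₁ h * (∑ g : G, π₁ g * A * (π₂ g)ᴴ) * (π₂ h)ᴴ = ∑ g : G, π₁ g * A * (π₂ g)ᴴ := by
    rw [Matrix.mul_sum, Matrix.sum_mul]
    rw [← Equiv.sum_comp (Equiv.mulLeft h) (fun g => π₁ g * A * (π₂ g)ᴴ)]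
    exact Finset.sum_congr rfl fun g _ => term g
  have hu : (π₂ h)ᴴ * π₂ h = 1 := mem_unitaryGroup_iff'.mp (h₂.1 h)
  have key' := congrArg (fun M => M * π₂ h) key
  rw [← key', Matrix.mul_assoc, hu, Matrix.mul_one]

lemma ProjOrth.entry_lemma {G : Type*} {n₁ n₂ : ℕ}
    (π₁ : G → Matrix (Fin n₁) (Fin n₁) ℂ) (π₂ : G → Matrix (Fin n₂) (Fin n₂) ℂ)
    (g : G) (i : Fin n₁) (j : Fin n₂) :
    (π₁ g * Matrix.single i j (1:ℂ) * (π₂ g)ᴴ) i j = π₁ g i i * star (π₂ g j j) := by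
  rw [Matrix.mul_apply]
  simp only [Matrix.mul_apply, Matrix.single, of_apply, conjTranspose_apply]
  simp [Finset.mul_sum, Finset.sum_mul, ite_and, Finset.sum_ite_eq]

lemma ProjOrth.trace_avg {G : Type*} [Fintype G] {n : ℕ} (π : G → Matrix (Fin n) (Fin n) ℂ)
    (hu : ∀ g : G, (π g)ᴴ * π g = 1) (A : Matrix (Fin n) (Fin n) ℂ) :
    (∑ g : G, π g * A * (π g)ᴴ).trace = (Fintype.card G : ℂ) * A.trace := by
  rw [Matrix.trace_sum]
  have h : ∀ g : G, (π g * A * (π g)ᴴ).trace = A.trace := by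
    intro g
    rw [Matrix.trace_mul_comm, ← Matrix.mul_assoc, hu g, Matrix.one_mul]
  simp [h, Finset.sum_const, Finset.card_univ, mul_comm]

lemma ProjOrth.sum_rearrange {G : Type*} [Fintype G] {n₁ n₂ : ℕ}
    (π₁ : G → Matrix (Fin n₁) (Fin n₁) ℂ) (π₂ : G → Matrix (Fin n₂) (Fin n₂) ℂ) :
    ∑ g : G, (π₁ g).trace * (starRingEnd ℂ) ((π₂ g).trace)
      = ∑ i : Fin n₁, ∑ j : Fin n₂, (∑ g : G, π₁ g * Matrix.single i j (1:ℂ) * (π₂ g)ᴴ) i j := by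
  have rhs : ∀ (i : Fin n₁) (j : Fin n₂), (∑ g : G, π₁ g * Matrix.single i j (1:ℂ) * (π₂ g)ᴴ) i j
      = ∑ g : G, π₁ g i i * star (π₂ g j j) := by
    intro i j
    rw [Matrix.sum_apply]
    exact Finset.sum_congr rfl fun g _ => ProjOrth.entry_lemma π₁ π₂ g i j
  simp only [rhs]
  have lhs : ∀ g : G, (π₁ g).trace * (starRingEnd ℂ) ((π₂ g).trace)
      = ∑ i : Fin n₁, ∑ j : Fin n₂, π₁ g i i * star (π₂ g j j) := by
    intro g
    rw [Matrix.trace, Matrix.trace, map_sum, Finset.sum_mul_sum]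
    rfl
  simp only [lhs]
  rw [Finset.sum_comm]
  exact Finset.sum_congr rfl fun i _ => Finset.sum_comm

lemma ProjOrth.char_eq_of_iso {G : Type*} {n₁ n₂ : ℕ} {π₁ : G → Matrix (Fin n₁) (Fin n₁) ℂ}
    {π₂ : G → Matrix (Fin n₂) (Fin n₂) ℂ} (h : ProjRepIso π₁ π₂) (g : G) :
    (π₂ g).trace = (π₁ g).trace := by
  obtain ⟨S, hS⟩ := h
  set M : Matrix (Fin n₂) (Fin n₁) ℂ := LinearMap.toMatrix' (S : (Fin n₁ → ℂ) →ₗ[ℂ] (Fin n₂ → ℂ)) with hM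
  set N : Matrix (Fin n₁) (Fin n₂) ℂ := LinearMap.toMatrix' (S.symm : (Fin n₂ → ℂ) →ₗ[ℂ] (Fin n₁ → ℂ)) with hN
  have hSv : ∀ v, M.mulVec v = S v := by
    intro v
    have := Matrix.toLin'_toMatrix' (S : (Fin n₁ → ℂ) →ₗ[ℂ] (Fin n₂ → ℂ))
    calc M.mulVec v = Matrix.toLin' M v := rfl
      _ = S v := by rw [hM, this]; rfl
  have hNM : N * M = 1 := by
    rw [hM, hN, ← LinearMap.toMatrix'_comp]
    have : (S.symm : (Fin n₂ → ℂ) →ₗ[ℂ] (Fin n₁ → ℂ)) ∘ₗ (S : (Fin n₁ → ℂ) →ₗ[ℂ] (Fin n₂ → ℂ))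
        = LinearMap.id := by ext v; simp
    rw [this, LinearMap.toMatrix'_id]
  have hint : ∀ g : G, M * π₁ g = π₂ g * M := by
    intro g
    apply Matrix.toLin'.injective
    apply LinearMap.ext
    intro v
    show (M * π₁ g).mulVec v = (π₂ g * M).mulVec v
    rw [← mulVec_mulVec, ← mulVec_mulVec, hSv, hSv, hS]
  calc (π₂ g).trace = (π₂ g * (M * N)).trace := by
        have hMN : M * N = 1 := by
          rw [hM, hN, ← LinearMap.toMatrix'_comp]
          have : (S : (Fin n₁ → ℂ) →ₗ[ℂ] (Fin n₂ → ℂ)) ∘ₗ (S.symm : (Fin n₂ → ℂ) →ₗ[ℂ] (Fin n₁ → ℂ))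
              = LinearMap.id := by ext v; simp
          rw [this, LinearMap.toMatrix'_id]
        rw [hMN, Matrix.mul_one]
    _ = ((π₂ g * M) * N).trace := by rw [Matrix.mul_assoc]
    _ = (N * (π₂ g * M)).trace := Matrix.trace_mul_comm _ _
    _ = (N * (M * π₁ g)).trace := by rw [hint]
    _ = ((N * M) * π₁ g).trace := by rw [Matrix.mul_assoc]
    _ = (π₁ g).trace := by rw [hNM, Matrix.one_mul]

/-- Orthogonality of irreducible projective characters. -/
theorem projective_character_orthogonality
    {G : Type*} [Group G] [Fintype G]
    (ω : G → G → ℂ) (hω : IsFactorSet ω)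
    {n₁ n₂ : ℕ}
    (π₁ : G → Matrix (Fin n₁) (Fin n₁) ℂ)
    (π₂ : G → Matrix (Fin n₂) (Fin n₂) ℂ)
    (h₁ : IsProjRep ω π₁) (h₂ : IsProjRep ω π₂)
    (hirr₁ : IsIrredRep π₁) (hirr₂ : IsIrredRep π₂) :
    (ProjRepIso π₁ π₂ →
      ∑ g : G, projChar π₁ g * (starRingEnd ℂ) (projChar π₂ g) = (Fintype.card G : ℂ)) ∧
    (¬ ProjRepIso π₁ π₂ →
      ∑ g : G, projChar π₁ g * (starRingEnd ℂ) (projChar π₂ g) = 0) := by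
  constructor
  · intro hiso
    simp only [projChar]
    have step1 : ∑ g : G, (π₁ g).trace * (starRingEnd ℂ) ((π₂ g).trace)
        = ∑ g : G, (π₁ g).trace * (starRingEnd ℂ) ((π₁ g).trace) :=
      Finset.sum_congr rfl fun g _ => by rw [ProjOrth.char_eq_of_iso hiso]
    rw [step1, ProjOrth.sum_rearrange π₁ π₁]
    have hn₁ : (n₁ : ℂ) ≠ 0 := by
      exact_mod_cast Nat.cast_ne_zero.mpr hirr₁.1.ne'
    have hij : ∀ (i j : Fin n₁),
        (∑ g : G, π₁ g * Matrix.single i j (1:ℂ) * (π₁ g)ᴴ) i j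
          = if i = j then (Fintype.card G : ℂ) / n₁ else 0 := by
      intro i j
      obtain ⟨c, hc⟩ := ProjOrth.schur_same hirr₁ _
        (fun g => ProjOrth.avg_intertwines hω h₁ h₁ (Matrix.single i j (1:ℂ)) g)
      have htr := ProjOrth.trace_avg π₁ (fun g => mem_unitaryGroup_iff'.mp (h₁.1 g))
        (Matrix.single i j (1:ℂ))
      rw [hc] at htr ⊢
      rw [Matrix.trace_smul, Matrix.trace_one] at htr
      rw [Matrix.smul_apply, Matrix.one_apply]
      by_cases hijeq : i = j
      · subst hijeq
        rw [Matrix.trace_single_eq_same] at htr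
        simp only [if_pos rfl, ↓reduceIte, smul_eq_mul, mul_one] at htr ⊢
        have hcard : (Fintype.card (Fin n₁) : ℂ) = (n₁ : ℂ) := by norm_num
        rw [hcard] at htr
        field_simp at htr ⊢
        linear_combination htr
      · simp [hijeq]
    simp only [hij]
    rw [Finset.sum_congr rfl (fun i _ => Finset.sum_ite_eq (Finset.univ : Finset (Fin n₁)) i
      (fun _ => (Fintype.card G : ℂ) / n₁))]
    simp only [Finset.mem_univ, if_pos]
    rw [Finset.sum_const, Finset.card_univ, Fintype.card_fin]
    rw [nsmul_eq_mul]
    field_simp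
  · intro hni
    simp only [projChar]
    rw [ProjOrth.sum_rearrange π₁ π₂]
    have hz : ∀ (i : Fin n₁) (j : Fin n₂),
        (∑ g : G, π₁ g * Matrix.single i j (1:ℂ) * (π₂ g)ᴴ) = 0 := by
      intro i j
      exact ProjOrth.schur_ne hirr₁ hirr₂ (fun h => hni (ProjOrth.projRepIso_symm h)) _
        (fun g => ProjOrth.avg_intertwines hω h₁ h₂ (Matrix.single i j (1:ℂ)) g)
    simp [hz]
end

section
/- Projective characters determine the isomorphism class: let ω be a factor set on a finite group G and let π₁ and π₂ be unitary ω-representations of G (not necessarily irreducible) with characters χ₁ and χ₂. Then π₁ and π₂ are isomorphic if and only if χ₁(g) = χ₂(g) for all g ∈ G. -/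
open Matrix

open LinearMap

namespace PCAux
set_option linter.unusedSectionVars false
set_option maxHeartbeats 800000

section TraceLemma
variable {k m : Type*} [Fintype k] [Fintype m] [DecidableEq k] [DecidableEq m]

lemma entry_sandwich (A : Matrix k k ℂ) (B : Matrix m m ℂ) (i : k) (j : m) :
    (A * Matrix.single i j (1:ℂ) * B) i j = A i i * B j j := by
  simp [Matrix.mul_apply, Matrix.single, ite_and, Finset.mul_sum, Finset.sum_ite_eq,
    Finset.sum_ite_eq']

lemma stdBasis_repr (M : Matrix k m ℂ) (p : k × m) :
    (Matrix.stdBasis ℂ k m).repr M p = M p.1 p.2 := by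
  simp [Matrix.stdBasis, Pi.basis_repr]

/-- The operator `X ↦ A ∘ X ∘ B` on a hom space. -/
def sandwich {V W : Type*} [AddCommGroup V] [Module ℂ V] [AddCommGroup W] [Module ℂ W]
    (A : W →ₗ[ℂ] W) (B : V →ₗ[ℂ] V) : (V →ₗ[ℂ] W) →ₗ[ℂ] (V →ₗ[ℂ] W) where
  toFun X := A ∘ₗ X ∘ₗ B
  map_add' X Y := by simp [LinearMap.add_comp, LinearMap.comp_add]
  map_smul' c X := by simp [LinearMap.smul_comp, LinearMap.comp_smul]

/-- The operator `M ↦ A * M * B` on a matrix space. -/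
noncomputable def msandwich (A : Matrix k k ℂ) (B : Matrix m m ℂ) :
    Matrix k m ℂ →ₗ[ℂ] Matrix k m ℂ where
  toFun M := A * M * B
  map_add' M N := by simp [Matrix.mul_add, Matrix.add_mul]
  map_smul' c M := by simp [Matrix.mul_smul, Matrix.smul_mul]

lemma trace_msandwich (A : Matrix k k ℂ) (B : Matrix m m ℂ) :
    trace ℂ (Matrix k m ℂ) (msandwich A B) = A.trace * B.trace := by
  rw [trace_eq_matrix_trace ℂ (Matrix.stdBasis ℂ k m)]
  rw [Matrix.trace, Matrix.trace, Matrix.trace, Finset.sum_mul_sum, ← Finset.sum_product']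
  apply Finset.sum_congr rfl
  rintro ⟨i, j⟩ -
  simp only [Matrix.diag_apply, LinearMap.toMatrix_apply, stdBasis_repr,
    Matrix.stdBasis_eq_single, msandwich, LinearMap.coe_mk, AddHom.coe_mk]
  exact entry_sandwich A B i j

variable {V W : Type*} [AddCommGroup V] [Module ℂ V] [AddCommGroup W] [Module ℂ W]
  [FiniteDimensional ℂ V] [FiniteDimensional ℂ W]

lemma trace_sandwich (A : W →ₗ[ℂ] W) (B : V →ₗ[ℂ] V) :
    trace ℂ (V →ₗ[ℂ] W) (sandwich A B) = trace ℂ W A * trace ℂ V B := by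
  classical
  set b₁ := Module.finBasis ℂ V
  set b₂ := Module.finBasis ℂ W
  set e : (V →ₗ[ℂ] W) ≃ₗ[ℂ] Matrix (Fin (Module.finrank ℂ W)) (Fin (Module.finrank ℂ V)) ℂ :=
    LinearMap.toMatrix b₁ b₂ with he
  have h1 : e.conj (sandwich A B) =
      msandwich (LinearMap.toMatrix b₂ b₂ A) (LinearMap.toMatrix b₁ b₁ B) := by
    refine LinearMap.ext fun M => ?_
    simp only [LinearEquiv.conj_apply, LinearMap.coe_comp, Function.comp_apply,
      LinearEquiv.coe_coe, msandwich, LinearMap.coe_mk, AddHom.coe_mk, he]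
    show (LinearMap.toMatrix b₁ b₂) (sandwich A B ((LinearMap.toMatrix b₁ b₂).symm M)) = _
    rw [LinearMap.toMatrix_symm]
    show (LinearMap.toMatrix b₁ b₂) (A ∘ₗ (Matrix.toLin b₁ b₂ M) ∘ₗ B) = _
    rw [LinearMap.toMatrix_comp b₁ b₂ b₂, LinearMap.toMatrix_comp b₁ b₁ b₂,
      LinearMap.toMatrix_toLin, Matrix.mul_assoc]
  calc trace ℂ (V →ₗ[ℂ] W) (sandwich A B) = trace ℂ _ (e.conj (sandwich A B)) :=
        (LinearMap.trace_conj' _ _).symm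
    _ = (LinearMap.toMatrix b₂ b₂ A).trace * (LinearMap.toMatrix b₁ b₁ B).trace := by
        rw [h1, trace_msandwich]
    _ = trace ℂ W A * trace ℂ V B := by
        rw [← trace_eq_matrix_trace, ← trace_eq_matrix_trace]

end TraceLemma


section Rep
variable {G : Type*} [Group G] {ω : G → G → ℂ}

lemma factor_ne_zero (hω : IsFactorSet ω) (g h : G) : ω g h ≠ 0 := by
  intro h0
  have := hω.1 g h
  rw [h0] at this
  simp at this

lemma factor_inv_comm (hω : IsFactorSet ω) (g : G) : ω g g⁻¹ = ω g⁻¹ g := by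
  have := hω.2.2.2 g g⁻¹ g
  simpa [hω.2.1, hω.2.2.1] using this

variable {V : Type*} [AddCommGroup V] [Module ℂ V]

/-- A projective representation on a module. -/
def IsRepOn (ω : G → G → ℂ) (ρ : G → V →ₗ[ℂ] V) : Prop :=
  ρ 1 = LinearMap.id ∧ ∀ g h : G, ρ g ∘ₗ ρ h = ω g h • ρ (g * h)

/-- The inverse of `ρ g`, expressed through `ρ g⁻¹`. -/
noncomputable def rinv (ω : G → G → ℂ) (ρ : G → V →ₗ[ℂ] V) (g : G) : V →ₗ[ℂ] V :=
  (ω g g⁻¹)⁻¹ • ρ g⁻¹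

variable {ρ : G → V →ₗ[ℂ] V}

lemma IsRepOn.comp_rinv (hω : IsFactorSet ω) (hρ : IsRepOn ω ρ) (g : G) :
    ρ g ∘ₗ rinv ω ρ g = LinearMap.id := by
  rw [rinv, LinearMap.comp_smul, hρ.2, mul_inv_cancel, hρ.1, inv_smul_smul₀ (factor_ne_zero hω g g⁻¹)]

lemma IsRepOn.rinv_comp (hω : IsFactorSet ω) (hρ : IsRepOn ω ρ) (g : G) :
    rinv ω ρ g ∘ₗ ρ g = LinearMap.id := by
  rw [rinv, LinearMap.smul_comp, hρ.2, inv_mul_cancel, hρ.1, factor_inv_comm hω,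
    inv_smul_smul₀ (factor_ne_zero hω g⁻¹ g)]

-- As `Module.End` products (`*` = `∘ₗ`).
lemma IsRepOn.mul_rinv (hω : IsFactorSet ω) (hρ : IsRepOn ω ρ) (g : G) :
    (ρ g : Module.End ℂ V) * rinv ω ρ g = 1 := hρ.comp_rinv hω g

lemma IsRepOn.rinv_mul (hω : IsFactorSet ω) (hρ : IsRepOn ω ρ) (g : G) :
    (rinv ω ρ g : Module.End ℂ V) * ρ g = 1 := hρ.rinv_comp hω g

lemma IsRepOn.rinv_rinv (hω : IsFactorSet ω) (hρ : IsRepOn ω ρ) (g h : G) :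
    rinv ω ρ g ∘ₗ rinv ω ρ h = (ω h g)⁻¹ • rinv ω ρ (h * g) := by
  have hl : ((rinv ω ρ g : Module.End ℂ V) * rinv ω ρ h) * ((ρ h : Module.End ℂ V) * ρ g) = 1 := by
    calc ((rinv ω ρ g : Module.End ℂ V) * rinv ω ρ h) * ((ρ h : Module.End ℂ V) * ρ g)
        = rinv ω ρ g * ((rinv ω ρ h * ρ h) * ρ g) := by noncomm_ring
      _ = 1 := by rw [hρ.rinv_mul hω, one_mul, hρ.rinv_mul hω]
  have hr : ((ρ h : Module.End ℂ V) * ρ g) * ((ω h g)⁻¹ • rinv ω ρ (h * g)) = 1 := by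
    have h2 : (ρ h : Module.End ℂ V) * ρ g = ω h g • ρ (h * g) := hρ.2 h g
    rw [h2, smul_mul_assoc, mul_smul_comm, smul_smul, mul_inv_cancel₀ (factor_ne_zero hω h g), one_smul,
      hρ.mul_rinv hω]
  exact left_inv_eq_right_inv hl hr

end Rep

section Avg
variable {G : Type*} [Group G] [Fintype G] {ω : G → G → ℂ}
variable {V₁ V₂ : Type*} [AddCommGroup V₁] [Module ℂ V₁] [AddCommGroup V₂] [Module ℂ V₂]
variable (ρ₁ : G → V₁ →ₗ[ℂ] V₁) (ρ₂ : G → V₂ →ₗ[ℂ] V₂)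

/-- `T` intertwines `ρ₁` and `ρ₂`. -/
def Intertwines (T : V₁ →ₗ[ℂ] V₂) : Prop := ∀ g : G, ρ₂ g ∘ₗ T = T ∘ₗ ρ₁ g

/-- The averaging (Reynolds) operator on the hom space. -/
noncomputable def avg (ω : G → G → ℂ) : (V₁ →ₗ[ℂ] V₂) →ₗ[ℂ] (V₁ →ₗ[ℂ] V₂) :=
  (Fintype.card G : ℂ)⁻¹ • ∑ g : G, sandwich (ρ₂ g) (rinv ω ρ₁ g)

lemma avg_apply (T : V₁ →ₗ[ℂ] V₂) :
    avg ρ₁ ρ₂ ω T = (Fintype.card G : ℂ)⁻¹ • ∑ g : G, ρ₂ g ∘ₗ T ∘ₗ rinv ω ρ₁ g := by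
  simp [avg, sandwich, LinearMap.sum_apply]

variable {ρ₁ ρ₂}

lemma conj_term (hω : IsFactorSet ω) (h₁ : IsRepOn ω ρ₁) (h₂ : IsRepOn ω ρ₂)
    (T : V₁ →ₗ[ℂ] V₂) (h g : G) :
    ρ₂ h ∘ₗ (ρ₂ g ∘ₗ T ∘ₗ rinv ω ρ₁ g) ∘ₗ rinv ω ρ₁ h
      = ρ₂ (h * g) ∘ₗ T ∘ₗ rinv ω ρ₁ (h * g) := by
  have e1 : ρ₂ h ∘ₗ (ρ₂ g ∘ₗ T ∘ₗ rinv ω ρ₁ g) ∘ₗ rinv ω ρ₁ h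
      = (ρ₂ h ∘ₗ ρ₂ g) ∘ₗ T ∘ₗ (rinv ω ρ₁ g ∘ₗ rinv ω ρ₁ h) := by
    simp only [LinearMap.comp_assoc]
  rw [e1, h₂.2 h g, h₁.rinv_rinv hω g h, LinearMap.smul_comp, LinearMap.comp_smul,
    LinearMap.comp_smul, smul_smul, mul_inv_cancel₀ (factor_ne_zero hω h g), one_smul]

lemma avg_intertwines (hω : IsFactorSet ω) (h₁ : IsRepOn ω ρ₁) (h₂ : IsRepOn ω ρ₂)
    (T : V₁ →ₗ[ℂ] V₂) : Intertwines ρ₁ ρ₂ (avg ρ₁ ρ₂ ω T) := by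
  intro h
  have key : ρ₂ h ∘ₗ avg ρ₁ ρ₂ ω T ∘ₗ rinv ω ρ₁ h = avg ρ₁ ρ₂ ω T := by
    rw [avg_apply]
    simp only [LinearMap.comp_smul, LinearMap.smul_comp]
    congr 1
    have hdist : ρ₂ h ∘ₗ (∑ g : G, ρ₂ g ∘ₗ T ∘ₗ rinv ω ρ₁ g) ∘ₗ rinv ω ρ₁ h
        = ∑ g : G, ρ₂ h ∘ₗ (ρ₂ g ∘ₗ T ∘ₗ rinv ω ρ₁ g) ∘ₗ rinv ω ρ₁ h := by
      ext v
      simp [LinearMap.sum_apply, map_sum]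
    rw [hdist]
    calc ∑ g : G, ρ₂ h ∘ₗ (ρ₂ g ∘ₗ T ∘ₗ rinv ω ρ₁ g) ∘ₗ rinv ω ρ₁ h
        = ∑ g : G, ρ₂ (h * g) ∘ₗ T ∘ₗ rinv ω ρ₁ (h * g) :=
          Finset.sum_congr rfl fun g _ => conj_term hω h₁ h₂ T h g
      _ = ∑ g : G, ρ₂ g ∘ₗ T ∘ₗ rinv ω ρ₁ g :=
          Fintype.sum_equiv (Equiv.mulLeft h) _ _ fun g => rfl
  calc ρ₂ h ∘ₗ avg ρ₁ ρ₂ ω T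
      = ρ₂ h ∘ₗ avg ρ₁ ρ₂ ω T ∘ₗ (rinv ω ρ₁ h ∘ₗ ρ₁ h) := by rw [h₁.rinv_comp hω, comp_id]
    _ = (ρ₂ h ∘ₗ avg ρ₁ ρ₂ ω T ∘ₗ rinv ω ρ₁ h) ∘ₗ ρ₁ h := by simp only [LinearMap.comp_assoc]
    _ = avg ρ₁ ρ₂ ω T ∘ₗ ρ₁ h := by rw [key]

lemma avg_of_intertwines (hω : IsFactorSet ω) (h₁ : IsRepOn ω ρ₁)
    {T : V₁ →ₗ[ℂ] V₂} (hT : Intertwines ρ₁ ρ₂ T) : avg ρ₁ ρ₂ ω T = T := by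
  rw [avg_apply]
  have : ∀ g : G, ρ₂ g ∘ₗ T ∘ₗ rinv ω ρ₁ g = T := by
    intro g
    rw [← LinearMap.comp_assoc, hT g, LinearMap.comp_assoc, h₁.comp_rinv hω, comp_id]
  rw [Finset.sum_congr rfl fun g _ => this g, Finset.sum_const, Finset.card_univ, ← Nat.cast_smul_eq_nsmul ℂ,
    smul_smul, inv_mul_cancel₀ (Nat.cast_ne_zero.mpr Fintype.card_ne_zero), one_smul]

section FD
variable [FiniteDimensional ℂ V₁] [FiniteDimensional ℂ V₂]

lemma trace_avg :
    trace ℂ (V₁ →ₗ[ℂ] V₂) (avg ρ₁ ρ₂ ω)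
      = (Fintype.card G : ℂ)⁻¹ * ∑ g : G, trace ℂ V₂ (ρ₂ g) * trace ℂ V₁ (rinv ω ρ₁ g) := by
  rw [avg, _root_.map_smul, map_sum, smul_eq_mul]
  congr 1
  exact Finset.sum_congr rfl fun g _ => trace_sandwich _ _

lemma exists_nonzero_intertwiner (hω : IsFactorSet ω) (h₁ : IsRepOn ω ρ₁) (h₂ : IsRepOn ω ρ₂)
    (hs : ∑ g : G, trace ℂ V₂ (ρ₂ g) * trace ℂ V₁ (rinv ω ρ₁ g) ≠ 0) :
    ∃ T : V₁ →ₗ[ℂ] V₂, T ≠ 0 ∧ Intertwines ρ₁ ρ₂ T := by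
  by_contra hcon
  push_neg at hcon
  have hzero : avg ρ₁ ρ₂ ω = 0 := by
    ext T v
    have := hcon (avg ρ₁ ρ₂ ω T)
    by_cases hz : avg ρ₁ ρ₂ ω T = 0
    · simp [hz]
    · exact absurd (avg_intertwines hω h₁ h₂ T) (this hz)
  have := trace_avg (ρ₁ := ρ₁) (ρ₂ := ρ₂) (ω := ω)
  rw [hzero, map_zero] at this
  exact hs (by
    have hc : (Fintype.card G : ℂ)⁻¹ ≠ 0 :=
      inv_ne_zero (Nat.cast_ne_zero.mpr Fintype.card_ne_zero)
    field_simp at this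
    simpa using this.symm)

end FD
end Avg

section SelfPair
variable {G : Type*} [Group G] [Fintype G] {ω : G → G → ℂ}
variable {V : Type*} [AddCommGroup V] [Module ℂ V] [FiniteDimensional ℂ V]
variable {ρ : G → V →ₗ[ℂ] V}

lemma id_intertwines : Intertwines ρ ρ LinearMap.id := fun g => by
  rw [comp_id, id_comp]

lemma self_sum_ne_zero (hω : IsFactorSet ω) (hρ : IsRepOn ω ρ) (hV : Module.finrank ℂ V ≠ 0) :
    ∑ g : G, trace ℂ V (ρ g) * trace ℂ V (rinv ω ρ g) ≠ 0 := by
  have hNT : Nontrivial V := Module.finrank_pos_iff.mp (Nat.pos_of_ne_zero hV)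
  have hid : avg ρ ρ ω LinearMap.id = LinearMap.id := avg_of_intertwines hω hρ id_intertwines
  have hproj : IsProj (range (avg ρ ρ ω)) (avg ρ ρ ω) := by
    constructor
    · intro x
      exact mem_range_self _ x
    · rintro x ⟨y, rfl⟩
      have h1 : Intertwines ρ ρ (avg ρ ρ ω y) := avg_intertwines hω hρ hρ y
      exact avg_of_intertwines hω hρ h1
  have htr : trace ℂ (V →ₗ[ℂ] V) (avg ρ ρ ω)
      = (Module.finrank ℂ (range (avg ρ ρ ω)) : ℂ) := hproj.trace
  have hmem : LinearMap.id ∈ range (avg ρ ρ ω) := ⟨LinearMap.id, hid⟩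
  have hne : (LinearMap.id : V →ₗ[ℂ] V) ≠ 0 := by
    obtain ⟨x, hx⟩ := exists_ne (0 : V)
    intro h
    exact hx (by simpa using LinearMap.ext_iff.mp h x)
  have hrange : range (avg ρ ρ ω) ≠ ⊥ := by
    intro h
    rw [h] at hmem
    exact hne (by simpa using hmem)
  have hfr : Module.finrank ℂ (range (avg ρ ρ ω)) ≠ 0 := by
    intro h
    exact hrange (Submodule.finrank_eq_zero.mp h)
  intro hs
  rw [trace_avg, hs, mul_zero] at htr
  exact hfr (by exact_mod_cast htr.symm)

end SelfPair

section Maschke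
variable {G : Type*} [Group G] [Fintype G] {ω : G → G → ℂ}
variable {V : Type*} [AddCommGroup V] [Module ℂ V]
variable {ρ : G → V →ₗ[ℂ] V}

lemma rinv_invariant {K : Submodule ℂ V} (hK : ∀ g : G, ∀ x ∈ K, ρ g x ∈ K)
    (g : G) : ∀ x ∈ K, rinv ω ρ g x ∈ K := by
  intro x hx
  rw [rinv, LinearMap.smul_apply]
  exact K.smul_mem _ (hK g⁻¹ x hx)

lemma exists_invariant_compl (hω : IsFactorSet ω) (hρ : IsRepOn ω ρ)
    (K : Submodule ℂ V) (hK : ∀ g : G, ∀ x ∈ K, ρ g x ∈ K) :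
    ∃ K' : Submodule ℂ V, IsCompl K K' ∧ ∀ g : G, ∀ x ∈ K', ρ g x ∈ K' := by
  obtain ⟨q0, hq0⟩ := K.exists_isCompl
  set p₀ : V →ₗ[ℂ] V := K.subtype ∘ₗ K.projectionOnto q0 hq0 with hp₀
  set q : V →ₗ[ℂ] V := avg ρ ρ ω p₀ with hq
  have hmem : ∀ x : V, q x ∈ K := by
    intro x
    rw [hq, avg_apply, LinearMap.smul_apply, LinearMap.sum_apply]
    refine K.smul_mem _ (Submodule.sum_mem _ fun g _ => ?_)
    rw [LinearMap.comp_apply, LinearMap.comp_apply]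
    exact hK g _ (Subtype.coe_prop _)
  have hfix : ∀ x ∈ K, q x = x := by
    intro x hx
    rw [hq, avg_apply, LinearMap.smul_apply, LinearMap.sum_apply]
    have hterm : ∀ g : G, (ρ g ∘ₗ p₀ ∘ₗ rinv ω ρ g) x = x := by
      intro g
      rw [LinearMap.comp_apply, LinearMap.comp_apply]
      have h1 : rinv ω ρ g x ∈ K := rinv_invariant hK g x hx
      have h2 : p₀ (rinv ω ρ g x) = rinv ω ρ g x := by
        rw [hp₀, LinearMap.comp_apply]
        have := Submodule.linearProjOfIsCompl_apply_left hq0 ⟨rinv ω ρ g x, h1⟩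
        rw [show rinv ω ρ g x = ((⟨rinv ω ρ g x, h1⟩ : K) : V) from rfl, this]
        rfl
      rw [h2]
      exact LinearMap.ext_iff.mp (hρ.comp_rinv hω g) x
    rw [Finset.sum_congr rfl fun g _ => hterm g, Finset.sum_const, Finset.card_univ,
      ← Nat.cast_smul_eq_nsmul ℂ, smul_smul,
      inv_mul_cancel₀ (Nat.cast_ne_zero.mpr Fintype.card_ne_zero), one_smul]
  have hproj : IsProj K q := ⟨hmem, hfix⟩
  refine ⟨ker q, hproj.isCompl, ?_⟩
  intro g x hx
  have hcomm := avg_intertwines hω hρ hρ p₀ g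
  rw [mem_ker] at hx ⊢
  have := LinearMap.ext_iff.mp hcomm x
  rw [LinearMap.comp_apply, LinearMap.comp_apply] at this
  rw [← hq] at this
  rw [← this, hx, map_zero]

lemma isRepOn_restrict (hρ : IsRepOn ω ρ) {K : Submodule ℂ V}
    (hK : ∀ g : G, ∀ x ∈ K, ρ g x ∈ K) :
    IsRepOn ω (fun g => (ρ g).restrict (hK g)) := by
  constructor
  · ext x
    have := LinearMap.ext_iff.mp hρ.1 (x : V)
    simp [LinearMap.restrict_apply, this]
  · intro g h
    ext x
    have := LinearMap.ext_iff.mp (hρ.2 g h) (x : V)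
    simp only [LinearMap.comp_apply, LinearMap.smul_apply] at this ⊢
    simp [LinearMap.restrict_apply, this]

lemma rinv_restrict (hρ : IsRepOn ω ρ) {K : Submodule ℂ V}
    (hK : ∀ g : G, ∀ x ∈ K, ρ g x ∈ K) (g : G) :
    rinv ω (fun g => (ρ g).restrict (hK g)) g
      = (rinv ω ρ g).restrict (rinv_invariant hK g) := by
  ext x
  simp [rinv, LinearMap.restrict_apply]

end Maschke

section TraceAdd
variable {V : Type*} [AddCommGroup V] [Module ℂ V] [FiniteDimensional ℂ V]

lemma trace_restrict_add {p q : Submodule ℂ V} (h : IsCompl p q) (f : V →ₗ[ℂ] V)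
    (hp : ∀ x ∈ p, f x ∈ p) (hq : ∀ x ∈ q, f x ∈ q) :
    trace ℂ V f = trace ℂ p (f.restrict hp) + trace ℂ q (f.restrict hq) := by
  have key : f = (Submodule.prodEquivOfIsCompl p q h).conj
      ((f.restrict hp).prodMap (f.restrict hq)) := by
    refine LinearMap.ext fun v => ?_
    obtain ⟨z, rfl⟩ := (Submodule.prodEquivOfIsCompl p q h).surjective v
    rw [LinearEquiv.conj_apply_apply, LinearEquiv.symm_apply_apply]
    show f ((z.1 : V) + (z.2 : V)) = ((f.restrict hp) z.1 : V) + ((f.restrict hq) z.2 : V)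
    rw [map_add, LinearMap.restrict_coe_apply, LinearMap.restrict_coe_apply]
  conv_lhs => rw [key]
  rw [LinearMap.trace_conj', trace_prodMap']

lemma trace_eq_of_equiv {V₂ : Type*} [AddCommGroup V₂] [Module ℂ V₂]
    (e : V ≃ₗ[ℂ] V₂) (f₁ : V →ₗ[ℂ] V) (f₂ : V₂ →ₗ[ℂ] V₂)
    (hint : ∀ v : V, e (f₁ v) = f₂ (e v)) : trace ℂ V f₁ = trace ℂ V₂ f₂ := by
  have key : e.conj f₁ = f₂ := by
    refine LinearMap.ext fun v => ?_
    rw [LinearEquiv.conj_apply_apply, hint, e.apply_symm_apply]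
  rw [← key, LinearMap.trace_conj']

end TraceAdd

section Main
variable {G : Type*} [Group G] [Fintype G] {ω : G → G → ℂ}

theorem main_induction (hω : IsFactorSet ω) (n : ℕ) :
    ∀ (V₁ V₂ : Type) (_ : AddCommGroup V₁) (_ : Module ℂ V₁) (_ : AddCommGroup V₂)
      (_ : Module ℂ V₂) (_ : FiniteDimensional ℂ V₁) (_ : FiniteDimensional ℂ V₂)
      (ρ₁ : G → V₁ →ₗ[ℂ] V₁) (ρ₂ : G → V₂ →ₗ[ℂ] V₂),
      Module.finrank ℂ V₁ = n → IsRepOn ω ρ₁ → IsRepOn ω ρ₂ →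
      (∀ g : G, trace ℂ V₁ (ρ₁ g) = trace ℂ V₂ (ρ₂ g)) →
      (∀ g : G, trace ℂ V₁ (rinv ω ρ₁ g) = trace ℂ V₂ (rinv ω ρ₂ g)) →
      ∃ e : V₁ ≃ₗ[ℂ] V₂, ∀ (g : G) (v : V₁), e (ρ₁ g v) = ρ₂ g (e v) := by
  induction n using Nat.strong_induction_on with
  | _ n IH =>
    intro V₁ V₂ _ _ _ _ _ _ ρ₁ ρ₂ hrank h₁ h₂ hχ hχt
    by_cases h0 : Module.finrank ℂ V₁ = 0
    · have hr2 : Module.finrank ℂ V₂ = 0 := by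
        have h := hχ 1
        rw [h₁.1, h₂.1, trace_id, trace_id, h0] at h
        exact_mod_cast h.symm
      have hs1 : Subsingleton V₁ := Module.finrank_zero_iff.mp h0
      have hs2 : Subsingleton V₂ := Module.finrank_zero_iff.mp hr2
      exact ⟨LinearEquiv.ofSubsingleton _ _, fun g v => Subsingleton.elim _ _⟩
    · -- nonzero case: find a nonzero intertwiner
      have hs : ∑ g : G, trace ℂ V₂ (ρ₂ g) * trace ℂ V₁ (rinv ω ρ₁ g) ≠ 0 := by
        have he : ∑ g : G, trace ℂ V₂ (ρ₂ g) * trace ℂ V₁ (rinv ω ρ₁ g)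
            = ∑ g : G, trace ℂ V₁ (ρ₁ g) * trace ℂ V₁ (rinv ω ρ₁ g) :=
          Finset.sum_congr rfl fun g _ => by rw [hχ g]
        rw [he]
        exact self_sum_ne_zero hω h₁ h0
      obtain ⟨T, hT0, hT⟩ := exists_nonzero_intertwiner hω h₁ h₂ hs
      have hTv : ∀ (g : G) (v : V₁), T (ρ₁ g v) = ρ₂ g (T v) := fun g v =>
        (LinearMap.ext_iff.mp (hT g) v).symm
      have hTrv : ∀ (g : G) (v : V₁), T (rinv ω ρ₁ g v) = rinv ω ρ₂ g (T v) := by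
        intro g v
        simp only [rinv, LinearMap.smul_apply, _root_.map_smul]
        rw [hTv g⁻¹ v]
      have hKinv : ∀ g : G, ∀ x ∈ ker T, ρ₁ g x ∈ ker T := by
        intro g x hx
        rw [mem_ker] at hx ⊢
        rw [hTv g x, hx, map_zero]
      have hRinv : ∀ g : G, ∀ y ∈ range T, ρ₂ g y ∈ range T := by
        rintro g y ⟨v, rfl⟩
        exact ⟨ρ₁ g v, hTv g v⟩
      obtain ⟨K', hKc, hK'inv⟩ := exists_invariant_compl hω h₁ (ker T) hKinv
      obtain ⟨R', hRc, hR'inv⟩ := exists_invariant_compl hω h₂ (range T) hRinv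
      -- the equivalence K' ≃ range T induced by T
      set φ : K' →ₗ[ℂ] range T :=
        LinearMap.codRestrict (range T) (T.domRestrict K') (fun x => mem_range_self _ _) with hφ
      have hφapp : ∀ x : K', (φ x : V₂) = T (x : V₁) := fun x => rfl
      have hφinj : Function.Injective φ := by
        intro a b hab
        have h3 : T ((a : V₁) - (b : V₁)) = 0 := by
          rw [map_sub, sub_eq_zero]
          exact congrArg Subtype.val hab
        have h4 : ((a : V₁) - (b : V₁)) ∈ ker T ⊓ K' :=
          ⟨mem_ker.mpr h3, K'.sub_mem a.2 b.2⟩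
        rw [hKc.inf_eq_bot] at h4
        have := Submodule.mem_bot ℂ |>.mp h4
        exact Subtype.ext (sub_eq_zero.mp this)
      have hφsurj : Function.Surjective φ := by
        rintro ⟨y, hy⟩
        obtain ⟨v, rfl⟩ := hy
        have hv : v ∈ ker T ⊔ K' := by rw [hKc.sup_eq_top]; trivial
        obtain ⟨k, hk, k', hk', rfl⟩ := Submodule.mem_sup.mp hv
        refine ⟨⟨k', hk'⟩, Subtype.ext ?_⟩
        rw [hφapp]
        simp only [map_add, mem_ker.mp hk, zero_add]
      set e₁ : K' ≃ₗ[ℂ] range T := LinearEquiv.ofBijective φ ⟨hφinj, hφsurj⟩ with he₁def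
      have he₁app : ∀ x : K', (e₁ x : V₂) = T (x : V₁) := fun x => rfl
      -- trace bookkeeping
      have htr1 : ∀ g : G, trace ℂ V₁ (ρ₁ g)
          = trace ℂ (ker T) ((ρ₁ g).restrict (hKinv g))
            + trace ℂ K' ((ρ₁ g).restrict (hK'inv g)) :=
        fun g => trace_restrict_add hKc (ρ₁ g) (hKinv g) (hK'inv g)
      have htr2 : ∀ g : G, trace ℂ V₂ (ρ₂ g)
          = trace ℂ (range T) ((ρ₂ g).restrict (hRinv g))
            + trace ℂ R' ((ρ₂ g).restrict (hR'inv g)) :=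
        fun g => trace_restrict_add hRc (ρ₂ g) (hRinv g) (hR'inv g)
      have htr1t : ∀ g : G, trace ℂ V₁ (rinv ω ρ₁ g)
          = trace ℂ (ker T) ((rinv ω ρ₁ g).restrict (rinv_invariant hKinv g))
            + trace ℂ K' ((rinv ω ρ₁ g).restrict (rinv_invariant hK'inv g)) :=
        fun g => trace_restrict_add hKc (rinv ω ρ₁ g) _ _
      have htr2t : ∀ g : G, trace ℂ V₂ (rinv ω ρ₂ g)
          = trace ℂ (range T) ((rinv ω ρ₂ g).restrict (rinv_invariant hRinv g))
            + trace ℂ R' ((rinv ω ρ₂ g).restrict (rinv_invariant hR'inv g)) :=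
        fun g => trace_restrict_add hRc (rinv ω ρ₂ g) _ _
      have hmid : ∀ g : G, trace ℂ K' ((ρ₁ g).restrict (hK'inv g))
          = trace ℂ (range T) ((ρ₂ g).restrict (hRinv g)) := by
        intro g
        refine trace_eq_of_equiv e₁ _ _ fun x => ?_
        refine Subtype.ext ?_
        rw [he₁app]
        show T (ρ₁ g (x : V₁)) = ρ₂ g (e₁ x : V₂)
        rw [he₁app, hTv]
      have hmidt : ∀ g : G, trace ℂ K' ((rinv ω ρ₁ g).restrict (rinv_invariant hK'inv g))
          = trace ℂ (range T) ((rinv ω ρ₂ g).restrict (rinv_invariant hRinv g)) := by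
        intro g
        refine trace_eq_of_equiv e₁ _ _ fun x => ?_
        refine Subtype.ext ?_
        rw [he₁app]
        show T (rinv ω ρ₁ g (x : V₁)) = rinv ω ρ₂ g (e₁ x : V₂)
        rw [he₁app, hTrv]
      -- induction hypothesis on ker T and R'
      have hrlt : Module.finrank ℂ (ker T) < n := by
        have hrn := LinearMap.finrank_range_add_finrank_ker T
        have hrpos : Module.finrank ℂ (range T) ≠ 0 := by
          intro hz
          have : range T = ⊥ := Submodule.finrank_eq_zero.mp hz
          exact hT0 (LinearMap.range_eq_bot.mp this)
        omega
      obtain ⟨e₂, he₂⟩ := IH (Module.finrank ℂ (ker T)) hrlt (ker T) R' inferInstance inferInstance inferInstance inferInstance inferInstance inferInstance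
        (fun g => (ρ₁ g).restrict (hKinv g)) (fun g => (ρ₂ g).restrict (hR'inv g)) rfl
        (isRepOn_restrict h₁ hKinv) (isRepOn_restrict h₂ hR'inv)
        (by
          intro g
          have h5 := hχ g
          rw [htr1 g, htr2 g, hmid g] at h5
          linear_combination h5)
        (by
          intro g
          rw [rinv_restrict h₁ hKinv g, rinv_restrict h₂ hR'inv g]
          have h5 := hχt g
          rw [htr1t g, htr2t g, hmidt g] at h5
          linear_combination h5)
      -- assemble the global equivalence
      refine ⟨(Submodule.prodEquivOfIsCompl (ker T) K' hKc).symm.trans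
        ((e₂.prodCongr e₁).trans (Submodule.prodEquivOfIsCompl R' (range T) hRc.symm)), ?_⟩
      intro g v
      obtain ⟨z, rfl⟩ := (Submodule.prodEquivOfIsCompl (ker T) K' hKc).surjective v
      have hz2 : ρ₁ g ((Submodule.prodEquivOfIsCompl (ker T) K' hKc) z)
          = (Submodule.prodEquivOfIsCompl (ker T) K' hKc)
              ((ρ₁ g).restrict (hKinv g) z.1, (ρ₁ g).restrict (hK'inv g) z.2) := by
        rw [Submodule.coe_prodEquivOfIsCompl' _ _ hKc z,
          Submodule.coe_prodEquivOfIsCompl' _ _ hKc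
            ((ρ₁ g).restrict (hKinv g) z.1, (ρ₁ g).restrict (hK'inv g) z.2),
          map_add, LinearMap.restrict_coe_apply, LinearMap.restrict_coe_apply]
      rw [hz2]
      simp only [LinearEquiv.trans_apply, LinearEquiv.symm_apply_apply, LinearEquiv.prodCongr_apply]
      rw [Submodule.coe_prodEquivOfIsCompl' _ _ hRc.symm, Submodule.coe_prodEquivOfIsCompl' _ _ hRc.symm]
      have hfin1 : (e₂ ((ρ₁ g).restrict (hKinv g) z.1) : V₂) = ρ₂ g (e₂ z.1 : V₂) := by
        rw [he₂ g z.1]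
        exact LinearMap.restrict_coe_apply _ _ _
      have hfin2 : (e₁ ((ρ₁ g).restrict (hK'inv g) z.2) : V₂) = ρ₂ g (e₁ z.2 : V₂) := by
        rw [he₁app, he₁app, LinearMap.restrict_coe_apply]
        exact hTv g _
      rw [hfin1, hfin2, map_add]

end Main

section TopGlue
variable {n : ℕ}

lemma trace_toLin' (M : Matrix (Fin n) (Fin n) ℂ) :
    trace ℂ (Fin n → ℂ) (Matrix.toLin' M) = M.trace := by
  rw [trace_eq_matrix_trace ℂ (Pi.basisFun ℂ (Fin n)), LinearMap.toMatrix_eq_toMatrix',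
    LinearMap.toMatrix'_toLin']

end TopGlue
end PCAux


namespace PCAux

variable {G : Type*} [Group G] {ω : G → G → ℂ}

lemma isRepOn_toLin' {n : ℕ} {π : G → Matrix (Fin n) (Fin n) ℂ} (hπ : IsProjRep ω π) :
    IsRepOn ω (fun g => Matrix.toLin' (π g)) := by
  constructor
  · show Matrix.toLin' (π 1) = LinearMap.id
    rw [hπ.2.1, Matrix.toLin'_one]
  · intro g h
    show Matrix.toLin' (π g) ∘ₗ Matrix.toLin' (π h) = ω g h • Matrix.toLin' (π (g * h))
    rw [← Matrix.toLin'_mul, hπ.2.2 g h, _root_.map_smul]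

end PCAux


/-- Projective characters determine the isomorphism class of unitary ω-representations. -/
theorem projective_characters_determine_isomorphism
    {G : Type*} [Group G] [Fintype G]
    (ω : G → G → ℂ) (hω : IsFactorSet ω)
    {n₁ n₂ : ℕ}
    (π₁ : G → Matrix (Fin n₁) (Fin n₁) ℂ)
    (π₂ : G → Matrix (Fin n₂) (Fin n₂) ℂ)
    (h₁ : IsProjRep ω π₁) (h₂ : IsProjRep ω π₂) :
    ProjRepIso π₁ π₂ ↔ ∀ g : G, projChar π₁ g = projChar π₂ g := by
  constructor
  · rintro ⟨S, hS⟩ g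
    show (π₁ g).trace = (π₂ g).trace
    rw [← PCAux.trace_toLin' (π₁ g), ← PCAux.trace_toLin' (π₂ g)]
    refine PCAux.trace_eq_of_equiv S _ _ fun v => ?_
    rw [Matrix.toLin'_apply, Matrix.toLin'_apply]
    exact hS g v
  · intro hchar
    have hrep₁ := PCAux.isRepOn_toLin' (ω := ω) h₁
    have hrep₂ := PCAux.isRepOn_toLin' (ω := ω) h₂
    have hχ : ∀ g : G, LinearMap.trace ℂ (Fin n₁ → ℂ) (Matrix.toLin' (π₁ g))
        = LinearMap.trace ℂ (Fin n₂ → ℂ) (Matrix.toLin' (π₂ g)) := by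
      intro g
      rw [PCAux.trace_toLin', PCAux.trace_toLin']
      exact hchar g
    have hχt : ∀ g : G,
        LinearMap.trace ℂ (Fin n₁ → ℂ) (PCAux.rinv ω (fun g => Matrix.toLin' (π₁ g)) g)
        = LinearMap.trace ℂ (Fin n₂ → ℂ) (PCAux.rinv ω (fun g => Matrix.toLin' (π₂ g)) g) := by
      intro g
      rw [PCAux.rinv, PCAux.rinv, _root_.map_smul, _root_.map_smul]
      congr 1
      exact hχ g⁻¹
    obtain ⟨e, he⟩ := PCAux.main_induction hω (Module.finrank ℂ (Fin n₁ → ℂ))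
      (Fin n₁ → ℂ) (Fin n₂ → ℂ) inferInstance inferInstance inferInstance inferInstance
      inferInstance inferInstance
      (fun g => Matrix.toLin' (π₁ g)) (fun g => Matrix.toLin' (π₂ g)) rfl hrep₁ hrep₂ hχ hχt
    refine ⟨e, fun g v => ?_⟩
    have := he g v
    rwa [Matrix.toLin'_apply, Matrix.toLin'_apply] at this
end

section
/- Projective characters vanish on non-ω-regular elements: let ω be a factor set on a finite group G and suppose g ∈ G is not ω-regular, i.e., there exists h ∈ G with g·h = h·g and ω(g,h) ≠ ω(h,g). Then χ_π(g) = 0 for every unitary ω-representation π of G. -/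
open Matrix

/-- Projective characters vanish on elements that are not ω-regular. -/
theorem projective_character_vanishes_of_not_regular
    {G : Type*} [Group G] [Fintype G]
    (ω : G → G → ℂ) (hω : IsFactorSet ω)
    (g : G) (hg : ∃ h : G, g * h = h * g ∧ ω g h ≠ ω h g) :
    ∀ {n : ℕ} (π : G → Matrix (Fin n) (Fin n) ℂ),
      IsProjRep ω π → projChar π g = 0 := by
  obtain ⟨h, hcomm, hne⟩ := hg
  intro n π hπ
  obtain ⟨hu, h1, hmul⟩ := hπ
  have e1 := hmul g h
  have e2 := hmul h g
  rw [← hcomm] at e2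
  have hωgh : ω g h ≠ 0 := by
    intro h0
    have := hω.1 g h
    rw [h0] at this
    simp at this
  set A := π g with hA
  set B := π h with hB
  set M := star B with hM
  have hMB : M * B = 1 := (Unitary.mem_iff.mp (hu h)).1
  have hBM : B * M = 1 := (Unitary.mem_iff.mp (hu h)).2
  -- π (g*h) = (ω g h)⁻¹ • (A * B)
  have hgh : π (g * h) = (ω g h)⁻¹ • (A * B) := by
    rw [e1, smul_smul, inv_mul_cancel₀ hωgh, one_smul]
  set c := ω h g * (ω g h)⁻¹ with hc
  have e3 : B * A = c • (A * B) := by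
    rw [e2, hgh, smul_smul]
  have key : A.trace = c * A.trace := by
    calc A.trace = ((M * B) * A).trace := by rw [hMB, one_mul]
    _ = (M * (B * A)).trace := by rw [mul_assoc]
    _ = (M * (c • (A * B))).trace := by rw [e3]
    _ = c * ((M * A) * B).trace := by
        rw [Matrix.mul_smul, Matrix.trace_smul, mul_assoc, smul_eq_mul, hc, mul_assoc, ← mul_assoc M A B]
    _ = c * (B * (M * A)).trace := by rw [Matrix.trace_mul_comm]
    _ = c * A.trace := by rw [← mul_assoc, hBM, one_mul]
  have hc1 : c ≠ 1 := by
    intro h1'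
    apply hne
    rw [hc] at h1'
    field_simp at h1'
    exact h1'.symm
  have : (c - 1) * A.trace = 0 := by ring_nf; linear_combination key.symm
  rcases mul_eq_zero.mp this with h0 | h0
  · exact absurd (by linear_combination h0) hc1
  · exact h0
end

section
/- All nonempty sectors of a G-graded fusion ring have equal total quantum dimension: given a G-graded fusion ring datum, for every h ∈ G such that there exists c ∈ 𝒞 with deg(c) = h, one has Σ_{a ∈ 𝒞, deg(a) = h} d_a² = Σ_{a ∈ 𝒞, deg(a) = 1} d_a², where 1 denotes the identity of G. -/
open Finset

/-- A `G`-graded fusion ring datum: a finite label set `C` with a `G`-grading,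
fusion multiplicities, positive quantum dimensions and a duality map, satisfying grading
compatibility, the dimension equation, Frobenius reciprocity and duality conditions. -/
structure GradedFusionData (G : Type*) [Group G] (C : Type*) [Fintype C] where
  deg : C → G
  Nf : C → C → C → ℕ
  qdim : C → ℝ
  qdim_pos : ∀ a : C, 0 < qdim a
  dual : C → C
  grading : ∀ a b c : C, Nf a b c ≠ 0 → deg c = deg a * deg b
  dim_mul : ∀ a b : C, qdim a * qdim b = ∑ c : C, (Nf a b c : ℝ) * qdim c
  frobenius : ∀ a b c : C, Nf a b c = Nf c (dual b) a
  qdim_dual : ∀ a : C, qdim (dual a) = qdim a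
  deg_dual : ∀ a : C, deg (dual a) = (deg a)⁻¹

/-- All nonempty sectors of a `G`-graded fusion ring have equal total quantum dimension:
if the `h`-sector is nonempty, then `∑_{deg a = h} d_a² = ∑_{deg a = 1} d_a²`. -/
theorem graded_fusion_sector_dim_eq
    {G : Type*} [Group G] [DecidableEq G] {C : Type*} [Fintype C]
    (F : GradedFusionData G C) (h : G) (hne : ∃ c : C, F.deg c = h) :
    ∑ a ∈ univ.filter (fun a : C => F.deg a = h), F.qdim a ^ 2 =
      ∑ a ∈ univ.filter (fun a : C => F.deg a = 1), F.qdim a ^ 2 := by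
  obtain ⟨c, hc⟩ := hne
  set e := F.dual c with he
  have hdegE : F.deg e = h⁻¹ := by rw [he, F.deg_dual, hc]
  have hde : F.qdim e = F.qdim c := F.qdim_dual c
  have hdee : F.qdim (F.dual e) = F.qdim c := by rw [F.qdim_dual, hde]
  have hdc : F.qdim c ≠ 0 := ne_of_gt (F.qdim_pos c)
  apply mul_right_cancel₀ hdc
  calc (∑ a ∈ univ.filter (fun a : C => F.deg a = h), F.qdim a ^ 2) * F.qdim c
      = ∑ a ∈ univ.filter (fun a : C => F.deg a = h),
          F.qdim a * (F.qdim a * F.qdim e) := by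
        rw [Finset.sum_mul]; apply Finset.sum_congr rfl; intro a _
        rw [hde]; ring
    _ = ∑ a ∈ univ.filter (fun a : C => F.deg a = h),
          ∑ b : C, F.qdim a * ((F.Nf a e b : ℝ) * F.qdim b) := by
        apply Finset.sum_congr rfl; intro a _
        rw [F.dim_mul a e, Finset.mul_sum]
    _ = ∑ b : C, ∑ a ∈ univ.filter (fun a : C => F.deg a = h),
          F.qdim a * ((F.Nf a e b : ℝ) * F.qdim b) := Finset.sum_comm
    _ = ∑ b ∈ univ.filter (fun b : C => F.deg b = 1),
          ∑ a ∈ univ.filter (fun a : C => F.deg a = h),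
          F.qdim a * ((F.Nf a e b : ℝ) * F.qdim b) := by
        symm
        apply Finset.sum_filter_of_ne
        intro b _ hb
        obtain ⟨a, ha, hterm⟩ := Finset.exists_ne_zero_of_sum_ne_zero hb
        have hN : F.Nf a e b ≠ 0 := by
          intro h0
          apply hterm
          rw [h0]; simp
        have := F.grading a e b hN
        rw [this, (Finset.mem_filter.mp ha).2, hdegE, mul_inv_cancel]
    _ = ∑ b ∈ univ.filter (fun b : C => F.deg b = 1),
          ∑ a : C, F.qdim a * ((F.Nf a e b : ℝ) * F.qdim b) := by
        apply Finset.sum_congr rfl; intro b hb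
        apply Finset.sum_filter_of_ne
        intro a _ hterm
        have hN : F.Nf a e b ≠ 0 := by
          intro h0
          apply hterm
          rw [h0]; simp
        have hg := F.grading a e b hN
        have hb1 := (Finset.mem_filter.mp hb).2
        rw [hb1, hdegE] at hg
        exact mul_inv_eq_one.mp hg.symm
    _ = ∑ b ∈ univ.filter (fun b : C => F.deg b = 1), F.qdim b ^ 2 * F.qdim c := by
        apply Finset.sum_congr rfl; intro b _
        have : ∀ a : C, F.qdim a * ((F.Nf a e b : ℝ) * F.qdim b)
            = F.qdim b * ((F.Nf b (F.dual e) a : ℝ) * F.qdim a) := by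
          intro a; rw [F.frobenius a e b]; ring
        rw [Finset.sum_congr rfl (fun a _ => this a), ← Finset.mul_sum,
          ← F.dim_mul b (F.dual e), hdee]
        ring
    _ = (∑ a ∈ univ.filter (fun a : C => F.deg a = 1), F.qdim a ^ 2) * F.qdim c := by
        rw [Finset.sum_mul]
end

section
/- Reduction of a single twist modulo N: for every positive integer N and every integer m, there exists a matrix A ∈ SL(2,ℤ) such that A·(gcd(m,N), 0)ᵀ ≡ (m, 0)ᵀ (mod N). -/
/-- Reduction of a single twist modulo `N`: there is `A ∈ SL(2,ℤ)` with
`A·(gcd(m,N), 0)ᵀ ≡ (m, 0)ᵀ (mod N)` entrywise. -/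
theorem sl2z_single_twist_mod (N : ℕ) (hN : 0 < N) (m : ℤ) :
    ∃ A : Matrix.SpecialLinearGroup (Fin 2) ℤ,
      ∀ i : Fin 2,
        (A : Matrix (Fin 2) (Fin 2) ℤ).mulVec ![(Int.gcd m (N : ℤ) : ℤ), 0] i ≡
          (![m, 0] : Fin 2 → ℤ) i [ZMOD (N : ℤ)] := by
  set g : ℤ := (Int.gcd m (N : ℤ) : ℤ) with hg
  have hgcdpos : 0 < Int.gcd m (N : ℤ) := Nat.pos_of_ne_zero (by
    simp [Int.gcd_eq_zero_iff]; omega)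
  have hgpos : 0 < g := by rw [hg]; exact_mod_cast hgcdpos
  have hgm : g ∣ m := Int.gcd_dvd_left m (N : ℤ)
  have hgN : g ∣ (N : ℤ) := Int.gcd_dvd_right m (N : ℤ)
  set m' : ℤ := m / g with hm'
  set N' : ℤ := (N : ℤ) / g with hN'
  have hm'g : m' * g = m := Int.ediv_mul_cancel hgm
  have hN'g : N' * g = (N : ℤ) := Int.ediv_mul_cancel hgN
  have hcop : Int.gcd m' N' = 1 := Int.gcd_div_gcd_div_gcd hgcdpos
  -- Bezout
  have hbez : m' * Int.gcdA m' N' + N' * Int.gcdB m' N' = 1 := by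
    have := Int.gcd_eq_gcd_ab m' N'
    rw [hcop] at this
    exact_mod_cast this.symm
  set u : ℤ := Int.gcdA m' N'
  set v : ℤ := Int.gcdB m' N'
  have hdet : (!![m', -v; N', u] : Matrix (Fin 2) (Fin 2) ℤ).det = 1 := by
    simp [Matrix.det_fin_two_of]
    linarith
  refine ⟨⟨!![m', -v; N', u], hdet⟩, ?_⟩
  intro i
  fin_cases i <;>
    simp [Matrix.mulVec, dotProduct, Fin.sum_univ_two, hm'g, hN'g, Int.ModEq]
end
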